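/- arXiv:2510.04059 — 3 statements merged into one kernel-verified Lean document; each statement's English description precedes it below -/
import Mathlib

section
/- Let β > 0 and δ in (0,1/2]. Set t_β = ceil(max(β e², ln(2/δ))) and d = ceil(sqrt(2 t_β ln(4/δ))). Then the polynomial q(x) = e^{-β} sum_{k=0}^{t_β} ((-β)^k / k!) p_{k,d}(x) satisfies sup_{x in [-1,1]} |e^{-β(1+x)} - q(x)| ≤ δ. -/
open Finset

/-- The Chebyshev expansion coefficients of the monomial `x ^ n`. -/
noncomputable def chebCoeff (n k : ℕ) : ℝ :=
  if k = 0 then (if Even n then (n.choose (n / 2) : ℝ) / 2 ^ n else 0)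
  else if k ≤ n ∧ Even (n - k) then (n.choose ((n - k) / 2) : ℝ) / 2 ^ (n - 1) else 0

/-- The degree-`d` Chebyshev truncation `p_{n,d}` of `x ^ n`. -/
noncomputable def chebTrunc (n d : ℕ) (x : ℝ) : ℝ :=
  ∑ j ∈ Finset.range (d + 1), chebCoeff n j * (Polynomial.Chebyshev.T ℝ (j : ℤ)).eval x

open Polynomial Polynomial.Chebyshev

set_option maxHeartbeats 1000000

lemma chebCoeff_nonneg (n k : ℕ) : 0 ≤ chebCoeff n k := by
  unfold chebCoeff; split_ifs <;> positivity

lemma chebCoeff_not_even {n j : ℕ} (h : ¬ Even (n - j)) : chebCoeff n j = 0 := by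
  unfold chebCoeff
  split_ifs with h1 h2 h3
  · exact absurd h2 (by rw [h1, Nat.sub_zero] at h; exact h)
  · rfl
  · exact absurd h3.2 h
  · rfl

lemma chebCoeff_of_gt {n j : ℕ} (h : n < j) : chebCoeff n j = 0 := by
  unfold chebCoeff
  rw [if_neg (by omega), if_neg (by omega)]

lemma chebCoeff_sub {k i : ℕ} (h : 2*i < k) : chebCoeff k (k - 2*i) = (k.choose i : ℝ) / 2^(k-1) := by
  unfold chebCoeff
  have h2 : k - (k - 2*i) = 2*i := by omega
  rw [if_neg (by omega), if_pos ⟨Nat.sub_le _ _, by rw [h2]; exact even_two_mul i⟩, h2]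
  norm_num

lemma split_sum (k : ℕ) (f : ℕ → ℝ) (hsym : ∀ i < k - k/2, f (k - i) = f i) :
    ∑ i ∈ range (k+1), f i = ∑ i ∈ range (k/2+1), f i + ∑ i ∈ range (k-k/2), f i := by
  have h1 := Finset.sum_Ico_consecutive f (Nat.zero_le (k/2+1)) (by omega : k/2+1 ≤ k+1)
  rw [Finset.range_eq_Ico, ← h1, ← Finset.range_eq_Ico]
  congr 1
  rw [Finset.sum_Ico_eq_sum_range]
  have he : k + 1 - (k/2+1) = k - k/2 := by omega
  rw [he, ← Finset.sum_range_reflect]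
  refine Finset.sum_congr rfl fun i hi => ?_
  simp only [Finset.mem_range] at hi
  have : k/2 + 1 + (k - k/2 - 1 - i) = k - i := by omega
  rw [this, hsym i hi]

theorem sum_chebCoeff_mul (k : ℕ) (F : ℤ → ℝ) (hF : ∀ n : ℤ, F (-n) = F n) :
    (2:ℝ)^k * ∑ j ∈ range (k+1), chebCoeff k j * F (j:ℤ)
      = ∑ i ∈ range (k+1), (k.choose i : ℝ) * F ((k:ℤ) - 2*i) := by
  have hLHS : ∑ j ∈ range (k+1), chebCoeff k j * F (j:ℤ)
      = ∑ i ∈ range (k/2+1), chebCoeff k (k - 2*i) * F ((k:ℤ) - 2*i) := by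
    have himg : ∑ j ∈ (range (k/2+1)).image (fun i => k - 2*i), chebCoeff k j * F (j:ℤ)
        = ∑ j ∈ range (k+1), chebCoeff k j * F (j:ℤ) := by
      refine Finset.sum_subset ?_ ?_
      · intro j hj
        simp only [Finset.mem_image, Finset.mem_range] at hj ⊢
        omega
      · intro j hj hj'
        simp only [Finset.mem_image, Finset.mem_range] at hj hj'
        have : ¬ Even (k - j) := by
          rintro ⟨m, hm⟩
          exact hj' ⟨m, by omega, by omega⟩
        rw [chebCoeff_not_even this, zero_mul]
    have hinj : ∀ a ∈ range (k/2+1), ∀ b ∈ range (k/2+1), k - 2*a = k - 2*b → a = b := by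
      intro a ha b hb hab
      simp only [Finset.mem_range] at ha hb
      omega
    rw [← himg, Finset.sum_image hinj]
    refine Finset.sum_congr rfl fun i hi => ?_
    simp only [Finset.mem_range] at hi
    congr 1
    push_cast [Nat.cast_sub (by omega : 2*i ≤ k)]
    ring
  rw [hLHS, Finset.mul_sum]
  rw [split_sum k (fun i => (k.choose i : ℝ) * F ((k:ℤ) - 2*i)) ?_]
  swap
  · intro i hi
    have hik : i ≤ k := by omega
    have h2 : ((k:ℤ) - 2*((k-i:ℕ):ℤ)) = -((k:ℤ) - 2*i) := by
      push_cast [Nat.cast_sub hik]; ring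
    rw [Nat.choose_symm hik, h2, hF]
  rcases Nat.even_or_odd k with ⟨m, hm⟩ | ⟨m, hm⟩
  · -- k even, k = m + m
    have hk2 : k/2 = m := by omega
    have hkk : k - m = m := by omega
    rw [hk2, hkk, Finset.sum_range_succ, Finset.sum_range_succ
      (f := fun i => (k.choose i : ℝ) * F ((k:ℤ) - 2*i))]
    have hlast : (2:ℝ)^k * (chebCoeff k (k - 2*m) * F ((k:ℤ) - 2*m))
        = (k.choose m : ℝ) * F ((k:ℤ) - 2*m) := by
      have h0 : k - 2*m = 0 := by omega
      rw [h0]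
      unfold chebCoeff
      rw [if_pos rfl, if_pos ⟨m, by omega⟩, hk2]
      have : (2:ℝ)^k ≠ 0 := by positivity
      field_simp
    rw [hlast]
    have hmain : ∑ i ∈ range m, (2:ℝ)^k * (chebCoeff k (k - 2*i) * F ((k:ℤ) - 2*i))
        = ∑ i ∈ range m, 2 * ((k.choose i : ℝ) * F ((k:ℤ) - 2*i)) := by
      refine Finset.sum_congr rfl fun i hi => ?_
      simp only [Finset.mem_range] at hi
      rw [chebCoeff_sub (by omega)]
      have h2 : (2:ℝ)^k = 2 * 2^(k-1) := by
        rw [← pow_succ']; congr 1; omega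
      have : (2:ℝ)^(k-1) ≠ 0 := by positivity
      field_simp [h2]
      rw [h2]; ring
    rw [hmain, ← Finset.mul_sum]
    ring
  · -- k odd, k = 2m+1
    have hk2 : k/2 = m := by omega
    have hkk : k - m = m + 1 := by omega
    rw [hk2, hkk]
    have hmain : ∑ i ∈ range (m+1), (2:ℝ)^k * (chebCoeff k (k - 2*i) * F ((k:ℤ) - 2*i))
        = ∑ i ∈ range (m+1), 2 * ((k.choose i : ℝ) * F ((k:ℤ) - 2*i)) := by
      refine Finset.sum_congr rfl fun i hi => ?_
      simp only [Finset.mem_range] at hi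
      rw [chebCoeff_sub (by omega)]
      have h2 : (2:ℝ)^k = 2 * 2^(k-1) := by
        rw [← pow_succ']; congr 1; omega
      have : (2:ℝ)^(k-1) ≠ 0 := by positivity
      field_simp [h2]
      rw [h2]; ring
    rw [hmain]
    simp only [two_mul, Finset.sum_add_distrib]

theorem pow_eq_sum_T (k : ℕ) (x : ℝ) :
    (2:ℝ)^k * x^k = ∑ i ∈ range (k+1), (k.choose i : ℝ) * (T ℝ ((k:ℤ) - 2*i)).eval x := by
  induction k with
  | zero => simp
  | succ k ih =>
    have hx : ∀ n : ℤ, 2 * x * (T ℝ n).eval x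
        = (T ℝ (n+1)).eval x + (T ℝ (n-1)).eval x := by
      intro n
      have h := congrArg (Polynomial.eval x) (T_add_one ℝ n)
      simp only [eval_sub, eval_mul, eval_ofNat, eval_X] at h
      linarith
    have key : (2:ℝ)^(k+1) * x^(k+1)
        = ∑ i ∈ range (k+1), (k.choose i : ℝ) * (T ℝ ((k:ℤ)+1 - 2*i)).eval x
          + ∑ i ∈ range (k+1), (k.choose i : ℝ) * (T ℝ ((k:ℤ)+1 - 2*(i+1))).eval x := by
      have h0 : (2:ℝ)^(k+1) * x^(k+1) = 2 * x * ((2:ℝ)^k * x^k) := by ring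
      rw [h0, ih, Finset.mul_sum, ← Finset.sum_add_distrib]
      refine Finset.sum_congr rfl fun i _ => ?_
      have h := hx ((k:ℤ) - 2*i)
      have e1 : (k:ℤ) - 2*i + 1 = (k:ℤ)+1 - 2*i := by ring
      have e2 : (k:ℤ) - 2*i - 1 = (k:ℤ)+1 - 2*(i+1) := by ring
      rw [e1, e2] at h
      linear_combination (k.choose i : ℝ) * h
    rw [key]
    have h1 : ∑ i ∈ range (k+1), (k.choose i : ℝ) * (T ℝ ((k:ℤ)+1 - 2*i)).eval x
        = ∑ i ∈ range (k+2), (k.choose i : ℝ) * (T ℝ ((k:ℤ)+1 - 2*i)).eval x := by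
      rw [Finset.sum_range_succ (n := k+1)]
      simp [Nat.choose_succ_self]
    have h2 : ∑ i ∈ range (k+1), (k.choose i : ℝ) * (T ℝ ((k:ℤ)+1 - 2*(i+1))).eval x
        = ∑ i ∈ range (k+2), (if i = 0 then 0 else (k.choose (i-1) : ℝ)) * (T ℝ ((k:ℤ)+1 - 2*i)).eval x := by
      rw [Finset.sum_range_succ' (n := k+1)]
      simp [Nat.succ_ne_zero]
    rw [h1, h2, ← Finset.sum_add_distrib]
    refine Finset.sum_congr rfl fun i _ => ?_
    rw [← add_mul]
    have hc : ((k+1).choose i : ℝ) = (k.choose i : ℝ) + (if i = 0 then 0 else (k.choose (i-1) : ℝ)) := by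
      cases i with
      | zero => simp
      | succ j => rw [if_neg (Nat.succ_ne_zero j)]; push_cast [Nat.choose_succ_succ]; ring
    rw [hc]
    push_cast
    ring_nf

lemma abs_T_le {x : ℝ} (hx : x ∈ Set.Icc (-1:ℝ) 1) (j : ℤ) : |(T ℝ j).eval x| ≤ 1 := by
  obtain ⟨h1, h2⟩ := hx
  rw [← Real.cos_arccos h1 h2, Polynomial.Chebyshev.T_real_cos]
  exact Real.abs_cos_le_one _

lemma pow_eq_chebSum (k : ℕ) (x : ℝ) :
    x^k = ∑ j ∈ range (k+1), chebCoeff k j * (T ℝ (j:ℤ)).eval x := by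
  have h := sum_chebCoeff_mul k (fun n => (T ℝ n).eval x)
    (fun n => by show (T ℝ (-n)).eval x = (T ℝ n).eval x; rw [T_neg])
  rw [← pow_eq_sum_T] at h
  exact (mul_left_cancel₀ (by positivity : (2:ℝ)^k ≠ 0) h).symm

lemma trunc_err (k d : ℕ) {x : ℝ} (hx : x ∈ Set.Icc (-1:ℝ) 1) :
    |x^k - chebTrunc k d x| ≤ ∑ j ∈ Ico (d+1) (k+1), chebCoeff k j := by
  rcases le_or_gt k d with h | h
  · have heq : chebTrunc k d x = x^k := by
      unfold chebTrunc
      rw [pow_eq_chebSum k x]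
      refine (Finset.sum_subset (Finset.range_subset_range.2 (by omega)) ?_).symm
      intro j hj hj'
      simp only [Finset.mem_range] at hj hj'
      rw [chebCoeff_of_gt (by omega), zero_mul]
    rw [heq, sub_self, abs_zero]
    exact Finset.sum_nonneg fun j _ => chebCoeff_nonneg _ _
  · unfold chebTrunc
    rw [pow_eq_chebSum k x, ← Finset.sum_Ico_eq_sub _ (by omega : d+1 ≤ k+1)]
    calc |∑ j ∈ Ico (d+1) (k+1), chebCoeff k j * (T ℝ (j:ℤ)).eval x|
        ≤ ∑ j ∈ Ico (d+1) (k+1), |chebCoeff k j * (T ℝ (j:ℤ)).eval x| :=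
          Finset.abs_sum_le_sum_abs _ _
      _ ≤ ∑ j ∈ Ico (d+1) (k+1), chebCoeff k j := by
          refine Finset.sum_le_sum fun j _ => ?_
          rw [abs_mul, abs_of_nonneg (chebCoeff_nonneg _ _)]
          exact mul_le_of_le_one_right (chebCoeff_nonneg _ _) (abs_T_le hx _)

lemma cheb_tail (k d : ℕ) (hk : 1 ≤ k) :
    ∑ j ∈ Ico (d+1) (k+1), chebCoeff k j ≤ 2 * Real.exp (-(d:ℝ)^2 / (2*k)) := by
  have hk0 : (0:ℝ) < k := by exact_mod_cast hk
  set lam : ℝ := 2*d/k with hlamdef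
  have hlam : 0 ≤ lam := by positivity
  -- binomial identity
  have hbinom : ∀ a : ℝ, ∑ i ∈ range (k+1), (k.choose i : ℝ) * Real.exp (a * ((k:ℝ) - 2*i))
      = (Real.exp (-a) + Real.exp a)^k := by
    intro a
    rw [add_pow]
    refine Finset.sum_congr rfl fun i hi => ?_
    simp only [Finset.mem_range] at hi
    have he : Real.exp (-a)^i * Real.exp a^(k-i) = Real.exp (a * ((k:ℝ) - 2*i)) := by
      rw [← Real.exp_nat_mul, ← Real.exp_nat_mul, ← Real.exp_add]
      congr 1
      push_cast [Nat.cast_sub (by omega : i ≤ k)]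
      ring
    rw [he]
    ring
  have hcosh := sum_chebCoeff_mul k (fun n => Real.cosh (lam * (n:ℝ) / 2))
    (fun n => by push_cast; rw [show lam * -(n:ℝ)/2 = -(lam*(n:ℝ)/2) by ring, Real.cosh_neg])
  have hRHS : ∑ i ∈ range (k+1), (k.choose i : ℝ) * Real.cosh (lam * (((k:ℤ) - 2*i : ℤ):ℝ) / 2)
      = 2^k * Real.cosh (lam/2)^k := by
    have e1 : ∀ i : ℕ, (k.choose i:ℝ) * Real.cosh (lam * (((k:ℤ) - 2*i : ℤ):ℝ) / 2)
        = ((k.choose i:ℝ) * Real.exp ((lam/2) * ((k:ℝ) - 2*i))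
            + (k.choose i:ℝ) * Real.exp ((-(lam/2)) * ((k:ℝ) - 2*i)))/2 := by
      intro i
      rw [Real.cosh_eq]
      push_cast
      ring_nf
    simp only [e1]
    rw [← Finset.sum_div, Finset.sum_add_distrib, hbinom (lam/2), hbinom (-(lam/2)), neg_neg]
    have key1 : Real.exp (-(lam/2)) + Real.exp (lam/2) = 2 * Real.cosh (lam/2) := by
      rw [Real.cosh_eq]; ring
    have key2 : Real.exp (lam/2) + Real.exp (-(lam/2)) = 2 * Real.cosh (lam/2) := by
      rw [Real.cosh_eq]; ring
    rw [key1, key2, mul_pow]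
    ring
  -- the chain
  have step1 : ∑ j ∈ Ico (d+1) (k+1), chebCoeff k j
      ≤ ∑ j ∈ range (k+1), chebCoeff k j * (2 * Real.cosh (lam * (j:ℝ)/2) * Real.exp (-(lam*d/2))) := by
    refine le_trans (Finset.sum_le_sum fun j hj => ?_)
      (Finset.sum_le_sum_of_subset_of_nonneg ?_ ?_)
    · show chebCoeff k j ≤ chebCoeff k j * (2 * Real.cosh (lam * (j:ℝ)/2) * Real.exp (-(lam*d/2)))
      simp only [Finset.mem_Ico] at hj
      have h1 : Real.exp (lam * (j:ℝ)/2) ≤ 2 * Real.cosh (lam * (j:ℝ)/2) := by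
        rw [Real.cosh_eq]
        have := Real.exp_pos (-(lam * (j:ℝ)/2))
        linarith
      have h2 : (1:ℝ) ≤ Real.exp (lam * (j:ℝ)/2) * Real.exp (-(lam*d/2)) := by
        rw [← Real.exp_add, ← Real.exp_zero]
        apply Real.exp_le_exp.2
        have : (d:ℝ) ≤ (j:ℝ) := by exact_mod_cast (by omega : d ≤ j)
        nlinarith
      nth_rewrite 1 [← mul_one (chebCoeff k j)]
      apply mul_le_mul_of_nonneg_left _ (chebCoeff_nonneg _ _)
      calc (1:ℝ) ≤ Real.exp (lam * (j:ℝ)/2) * Real.exp (-(lam*d/2)) := h2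
        _ ≤ 2 * Real.cosh (lam * (j:ℝ)/2) * Real.exp (-(lam*d/2)) :=
            mul_le_mul_of_nonneg_right h1 (Real.exp_pos _).le
    · intro j hj
      simp only [Finset.mem_Ico, Finset.mem_range] at hj ⊢
      omega
    · intro j _ _
      have := chebCoeff_nonneg k j
      have := Real.cosh_pos (x := lam * (j:ℝ)/2)
      positivity
  have step2 : ∑ j ∈ range (k+1), chebCoeff k j * (2 * Real.cosh (lam * (j:ℝ)/2) * Real.exp (-(lam*d/2)))
      = 2 * Real.exp (-(lam*d/2)) * Real.cosh (lam/2)^k := by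
    have : ∑ j ∈ range (k+1), chebCoeff k j * (2 * Real.cosh (lam * (j:ℝ)/2) * Real.exp (-(lam*d/2)))
        = 2 * Real.exp (-(lam*d/2)) * ∑ j ∈ range (k+1), chebCoeff k j * Real.cosh (lam * (j:ℝ)/2) := by
      rw [Finset.mul_sum]
      exact Finset.sum_congr rfl fun j _ => by ring
    rw [this]
    have hc := hcosh
    rw [hRHS] at hc
    have h2k : (2:ℝ)^k ≠ 0 := by positivity
    have hsum := mul_left_cancel₀ h2k hc
    push_cast at hsum
    rw [hsum]
  have step3 : 2 * Real.exp (-(lam*d/2)) * Real.cosh (lam/2)^k ≤ 2 * Real.exp (-(d:ℝ)^2 / (2*k)) := by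
    have h1 : Real.cosh (lam/2)^k ≤ Real.exp ((lam/2)^2/2)^k :=
      pow_le_pow_left₀ (le_of_lt (Real.cosh_pos _)) (Real.cosh_le_exp_half_sq _) k
    have h2 : Real.exp (-(lam*d/2)) * Real.exp ((lam/2)^2/2)^k = Real.exp (-(d:ℝ)^2/(2*k)) := by
      rw [← Real.exp_nat_mul, ← Real.exp_add]
      congr 1
      rw [hlamdef]
      field_simp
      ring
    calc 2 * Real.exp (-(lam*d/2)) * Real.cosh (lam/2)^k
        ≤ 2 * Real.exp (-(lam*d/2)) * Real.exp ((lam/2)^2/2)^k := by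
          apply mul_le_mul_of_nonneg_left h1
          positivity
      _ = 2 * Real.exp (-(d:ℝ)^2/(2*k)) := by rw [mul_assoc, h2]
  rw [step2] at step1
  linarith

/-- Polynomial approximation of `e^{-β(1+x)}`:
with `t_β = ⌈max (β e²) (ln (2/δ))⌉` and `d = ⌈√(2 t_β ln (4/δ))⌉`, the polynomial
`q(x) = e^{-β} ∑_{k=0}^{t_β} ((-β)^k / k!) p_{k,d}(x)` is a uniform `δ`-approximation of
`e^{-β(1+x)}` on `[-1, 1]`. -/
theorem exp_chebyshev_approx (β δ : ℝ) (hβ : 0 < β) (hδ0 : 0 < δ) (hδ : δ ≤ 1 / 2) :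
    ∀ x ∈ Set.Icc (-1 : ℝ) 1,
      |Real.exp (-β * (1 + x)) -
          Real.exp (-β) *
            ∑ k ∈ Finset.range (⌈max (β * Real.exp 1 ^ 2) (Real.log (2 / δ))⌉₊ + 1),
              (-β) ^ k / (Nat.factorial k) *
                chebTrunc k
                  ⌈Real.sqrt (2 * ⌈max (β * Real.exp 1 ^ 2) (Real.log (2 / δ))⌉₊ *
                    Real.log (4 / δ))⌉₊ x| ≤ δ := by
  intro x hx
  obtain ⟨hx1, hx2⟩ := hx
  set t : ℕ := ⌈max (β * Real.exp 1 ^ 2) (Real.log (2 / δ))⌉₊ with ht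
  set D : ℕ := ⌈Real.sqrt (2 * t * Real.log (4 / δ))⌉₊ with hD
  have habsx : |x| ≤ 1 := abs_le.2 ⟨hx1, hx2⟩
  -- basic facts
  have hβt : β * Real.exp 1 ^ 2 ≤ t := le_trans (le_max_left _ _) (Nat.le_ceil _)
  have hlogt : Real.log (2 / δ) ≤ t := le_trans (le_max_right _ _) (Nat.le_ceil _)
  have ht1 : 1 ≤ t := by
    rw [ht]
    rw [Nat.one_le_ceil_iff]
    exact lt_max_of_lt_left (by positivity)
  have ht0 : (0:ℝ) < t := by exact_mod_cast ht1
  have hlog4 : 0 ≤ Real.log (4 / δ) := Real.log_nonneg (by rw [le_div_iff₀ hδ0]; linarith)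
  have hDsq : 2 * t * Real.log (4 / δ) ≤ (D:ℝ)^2 := by
    have h1 : Real.sqrt (2 * t * Real.log (4 / δ)) ≤ (D:ℝ) := Nat.le_ceil _
    have h2 : Real.sqrt (2 * t * Real.log (4 / δ))^2 ≤ (D:ℝ)^2 :=
      pow_le_pow_left₀ (Real.sqrt_nonneg _) h1 2
    rwa [Real.sq_sqrt (by positivity)] at h2
  have hexpD : Real.exp (-(D:ℝ)^2/(2*t)) ≤ δ/4 := by
    have h1 : -(D:ℝ)^2/(2*t) ≤ -Real.log (4/δ) := by
      rw [div_le_iff₀ (by positivity)]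
      nlinarith
    calc Real.exp (-(D:ℝ)^2/(2*t)) ≤ Real.exp (-Real.log (4/δ)) := Real.exp_le_exp.2 h1
      _ = δ/4 := by
          rw [Real.exp_neg, Real.exp_log (by positivity)]
          rw [inv_div]
  have hexpt : Real.exp (-(t:ℝ)) ≤ δ/2 := by
    calc Real.exp (-(t:ℝ)) ≤ Real.exp (-Real.log (2/δ)) := Real.exp_le_exp.2 (by linarith)
      _ = δ/2 := by
          rw [Real.exp_neg, Real.exp_log (by positivity), inv_div]
  -- series decomposition
  set f : ℕ → ℝ := fun n => (-β*x)^n / n.factorial with hf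
  have hsummable : Summable f := Real.summable_pow_div_factorial _
  have hexp_eq : Real.exp (-β*x) = ∑' n, f n := by
    rw [Real.exp_eq_exp_ℝ, NormedSpace.exp_eq_tsum_div]
  set R : ℝ := ∑' i : ℕ, f (i + (t+1)) with hR
  have hdecomp : Real.exp (-β*x) = ∑ k ∈ range (t+1), f k + R := by
    rw [hexp_eq, ← Summable.sum_add_tsum_nat_add (t+1) hsummable]
  -- tail bound
  have htermbound : ∀ m : ℕ, t+1 ≤ m → |f m| ≤ Real.exp (-1:ℝ)^m := by
    intro m hm
    have hm0 : (0:ℝ) < m := by exact_mod_cast (by omega : 0 < m)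
    have hfactpos : (0:ℝ) < m.factorial := by exact_mod_cast m.factorial_pos
    have h1 : |f m| = |(-β*x)|^m / m.factorial := by
      rw [hf]; simp [abs_div, abs_pow, Nat.abs_cast]
    have h2 : |(-β*x)| ≤ β := by
      rw [abs_mul, abs_neg, abs_of_pos hβ]
      nlinarith [abs_nonneg x]
    have h3 : |(-β*x)|^m ≤ β^m := pow_le_pow_left₀ (abs_nonneg _) h2 m
    -- m^m / m! ≤ exp m
    have h4 : ((m:ℝ))^m / m.factorial ≤ Real.exp m := by
      calc ((m:ℝ))^m / m.factorial ≤ ∑ i ∈ range (m+1), (m:ℝ)^i / i.factorial := by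
            refine Finset.single_le_sum (f := fun i => (m:ℝ)^i / (i.factorial:ℝ)) ?_ ?_
            · intro i _; positivity
            · simp
        _ ≤ Real.exp m := Real.sum_le_exp_of_nonneg (by positivity) _
    have h5 : ((m:ℝ))^m ≤ Real.exp m * m.factorial := by
      rwa [div_le_iff₀ hfactpos] at h4
    have h6 : β^m / m.factorial ≤ (β * Real.exp 1 / m)^m := by
      rw [div_pow, mul_pow, div_le_div_iff₀ hfactpos (by positivity)]
      calc β^m * (m:ℝ)^m ≤ β^m * (Real.exp m * m.factorial) := by
            apply mul_le_mul_of_nonneg_left h5 (by positivity)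
        _ = β^m * Real.exp 1 ^ m * m.factorial := by
            rw [← Real.exp_nat_mul, mul_one]; ring
    have h7 : (β * Real.exp 1 / m) ≤ Real.exp (-1:ℝ) := by
      rw [Real.exp_neg, div_le_iff₀ hm0, inv_mul_eq_div, le_div_iff₀ (Real.exp_pos 1)]
      have hmge : (t:ℝ) ≤ m := by exact_mod_cast (by omega : t ≤ m)
      nlinarith [Real.exp_pos 1]
    have h8 : (β * Real.exp 1 / m)^m ≤ Real.exp (-1:ℝ)^m :=
      pow_le_pow_left₀ (by positivity) h7 m
    calc |f m| = |(-β*x)|^m / m.factorial := h1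
      _ ≤ β^m / m.factorial := by gcongr
      _ ≤ (β * Real.exp 1 / m)^m := h6
      _ ≤ Real.exp (-1:ℝ)^m := h8
  have he1 : (0:ℝ) < Real.exp (-1:ℝ) := Real.exp_pos _
  have he2 : Real.exp (-1:ℝ) ≤ 1/2 := by
    rw [Real.exp_neg]
    rw [inv_le_comm₀ (Real.exp_pos 1) (by norm_num)]
    have := Real.exp_one_gt_d9
    calc (1/2 : ℝ)⁻¹ = 2 := by norm_num
      _ ≤ Real.exp 1 := by linarith
  have hgeom : Summable (fun i : ℕ => Real.exp (-1:ℝ)^(i + (t+1))) := by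
    apply Summable.comp_injective (f := fun n : ℕ => Real.exp (-1:ℝ)^n) ?_ (add_left_injective (t+1))
    exact summable_geometric_of_lt_one he1.le (by linarith)
  have hRbound : |R| ≤ δ/2 := by
    have habs : Summable (fun i : ℕ => |f (i + (t+1))|) := by
      exact ((summable_nat_add_iff (t+1)).2 hsummable.abs)
    have h1 : |R| ≤ ∑' i : ℕ, |f (i + (t+1))| := by
      have hn : Summable (fun i : ℕ => ‖f (i + (t+1))‖) := by
        simpa [Real.norm_eq_abs] using habs
      have := norm_tsum_le_tsum_norm hn
      rw [hR]
      simpa [Real.norm_eq_abs] using this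
    have h2 : ∑' i : ℕ, |f (i + (t+1))| ≤ ∑' i : ℕ, Real.exp (-1:ℝ)^(i+(t+1)) :=
      Summable.tsum_le_tsum (fun i => htermbound _ (by omega)) habs hgeom
    have h3 : ∑' i : ℕ, Real.exp (-1:ℝ)^(i+(t+1))
        = Real.exp (-1:ℝ)^(t+1) * (1 - Real.exp (-1:ℝ))⁻¹ := by
      have : ∀ i : ℕ, Real.exp (-1:ℝ)^(i+(t+1)) = Real.exp (-1:ℝ)^(t+1) * Real.exp (-1:ℝ)^i := by
        intro i; rw [pow_add]; ring
      simp_rw [this]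
      rw [tsum_mul_left, tsum_geometric_of_lt_one he1.le (by linarith)]
    have h4 : Real.exp (-1:ℝ)^(t+1) * (1 - Real.exp (-1:ℝ))⁻¹ ≤ Real.exp (-(t:ℝ)) := by
      have hpow : Real.exp (-1:ℝ)^(t+1) = Real.exp (-(t:ℝ)) * Real.exp (-1:ℝ) := by
        rw [← Real.exp_nat_mul]
        rw [← Real.exp_add]
        congr 1
        push_cast
        ring
      rw [hpow, mul_assoc]
      nth_rewrite 2 [← mul_one (Real.exp (-(t:ℝ)))]
      apply mul_le_mul_of_nonneg_left _ (Real.exp_pos _).le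
      rw [mul_inv_le_iff₀ (by linarith)]
      linarith
    linarith
  -- polynomial part
  set S : ℝ := ∑ k ∈ range (t+1), f k with hS
  set Q : ℝ := ∑ k ∈ range (t+1), (-β)^k / (Nat.factorial k) * chebTrunc k D x with hQ
  have hSQ : |S - Q| ≤ 2 * Real.exp (-(D:ℝ)^2/(2*t)) * Real.exp β := by
    have hdiff : S - Q = ∑ k ∈ range (t+1), (-β)^k / (Nat.factorial k) * (x^k - chebTrunc k D x) := by
      rw [hS, hQ, ← Finset.sum_sub_distrib]
      refine Finset.sum_congr rfl fun k _ => ?_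
      rw [hf]
      simp only
      rw [mul_pow]
      ring
    have hterm : ∀ k ∈ range (t+1), |(-β)^k / (Nat.factorial k) * (x^k - chebTrunc k D x)|
        ≤ β^k / (Nat.factorial k) * (2 * Real.exp (-(D:ℝ)^2/(2*t))) := by
      intro k hk
      simp only [Finset.mem_range] at hk
      rw [abs_mul, abs_div, abs_pow, abs_neg, abs_of_pos hβ, Nat.abs_cast]
      apply mul_le_mul_of_nonneg_left _ (by positivity)
      rcases Nat.eq_zero_or_pos k with hk0 | hk0
      · subst hk0
        have h0 := trunc_err 0 D ⟨hx1, hx2⟩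
        have : Finset.Ico (D+1) (0+1) = ∅ := by
          apply Finset.Ico_eq_empty
          omega
        rw [this, Finset.sum_empty] at h0
        calc |x^0 - chebTrunc 0 D x| ≤ 0 := h0
          _ ≤ 2 * Real.exp (-(D:ℝ)^2/(2*t)) := by positivity
      · calc |x^k - chebTrunc k D x| ≤ ∑ j ∈ Ico (D+1) (k+1), chebCoeff k j :=
              trunc_err k D ⟨hx1, hx2⟩
          _ ≤ 2 * Real.exp (-(D:ℝ)^2 / (2*k)) := cheb_tail k D hk0
          _ ≤ 2 * Real.exp (-(D:ℝ)^2 / (2*t)) := by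
              apply mul_le_mul_of_nonneg_left _ (by norm_num)
              apply Real.exp_le_exp.2
              have hk0' : (0:ℝ) < k := by exact_mod_cast hk0
              have hkt : (k:ℝ) ≤ t := by exact_mod_cast (by omega : k ≤ t)
              rw [neg_div, neg_div, neg_le_neg_iff]
              apply div_le_div_of_nonneg_left (by positivity) (by positivity)
              linarith
    calc |S - Q| ≤ ∑ k ∈ range (t+1), |(-β)^k / (Nat.factorial k) * (x^k - chebTrunc k D x)| := by
          rw [hdiff]; exact Finset.abs_sum_le_sum_abs _ _
      _ ≤ ∑ k ∈ range (t+1), β^k / (Nat.factorial k) * (2 * Real.exp (-(D:ℝ)^2/(2*t))) :=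
          Finset.sum_le_sum hterm
      _ = (2 * Real.exp (-(D:ℝ)^2/(2*t))) * ∑ k ∈ range (t+1), β^k / (Nat.factorial k) := by
          rw [Finset.mul_sum]
          exact Finset.sum_congr rfl fun k _ => by ring
      _ ≤ (2 * Real.exp (-(D:ℝ)^2/(2*t))) * Real.exp β := by
          apply mul_le_mul_of_nonneg_left (Real.sum_le_exp_of_nonneg hβ.le _) (by positivity)
      _ = 2 * Real.exp (-(D:ℝ)^2/(2*t)) * Real.exp β := by ring
  -- final assembly
  have hsplit : Real.exp (-β * (1+x)) = Real.exp (-β) * Real.exp (-β*x) := by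
    rw [← Real.exp_add]
    congr 1
    ring
  have hexpβ : Real.exp (-β) ≤ 1 := Real.exp_le_one_iff.2 (by linarith)
  have hkey : Real.exp (-β * (1+x)) - Real.exp (-β) * Q = Real.exp (-β) * ((S - Q) + R) := by
    rw [hsplit, hdecomp]
    ring
  rw [hkey, abs_mul, abs_of_pos (Real.exp_pos _)]
  calc Real.exp (-β) * |S - Q + R| ≤ Real.exp (-β) * (|S - Q| + |R|) :=
        mul_le_mul_of_nonneg_left (abs_add_le _ _) (Real.exp_pos _).le
    _ ≤ Real.exp (-β) * (2 * Real.exp (-(D:ℝ)^2/(2*t)) * Real.exp β) + Real.exp (-β) * (δ/2) := by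
        nlinarith [Real.exp_pos (-β), hSQ, hRbound, abs_nonneg (S-Q), abs_nonneg R]
    _ ≤ δ/2 + δ/2 := by
        have h1 : Real.exp (-β) * (2 * Real.exp (-(D:ℝ)^2/(2*t)) * Real.exp β)
            = 2 * Real.exp (-(D:ℝ)^2/(2*t)) := by
          rw [show Real.exp (-β) * (2 * Real.exp (-(D:ℝ)^2/(2*t)) * Real.exp β)
              = 2 * Real.exp (-(D:ℝ)^2/(2*t)) * (Real.exp (-β) * Real.exp β) by ring,
            ← Real.exp_add, neg_add_cancel, Real.exp_zero, mul_one]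
        rw [h1]
        have h2 : Real.exp (-β) * (δ/2) ≤ δ/2 := by nlinarith [Real.exp_pos (-β)]
        linarith
    _ = δ := by ring
end

section
/- For every nonnegative integer n and every positive integer d ≥ ceil(sqrt(2n ln(2/δ))), the Laurent polynomial sum_{j=0}^{d} (c_{n,j}/2)(z^j + z^{-j}), evaluated at z = e^{iy}, δ-approximates cos^n(y) uniformly over all real y: sup_{y in ℝ} |cos^n(y) - sum_{j=0}^{d} c_{n,j} cos(jy)| ≤ δ ≤ 2 exp(-d²/(2n)). -/
open Finset

/-- Auxiliary weight: `C(n,k)/2^n`. -/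
noncomputable def ww (n k : ℕ) : ℝ := (n.choose k : ℝ) / 2 ^ n

lemma ww_nonneg (n k : ℕ) : 0 ≤ ww n k := by unfold ww; positivity

lemma cos_pow_expand (n : ℕ) (y : ℝ) :
    Real.cos y ^ n = ∑ k ∈ range (n+1), ww n k * Real.cos (((n:ℝ) - 2*k) * y) := by
  have key : (2:ℂ) * ((2:ℂ) * Complex.cos y) ^ n =
      ∑ k ∈ range (n+1), (n.choose k : ℂ) *
        (2 * Complex.cos ((((n:ℝ) - 2*(k:ℝ)) * y : ℝ) : ℂ)) := by
    set a := Complex.exp (y * Complex.I) with ha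
    set b := Complex.exp (-(y * Complex.I)) with hb
    have hcos : (2:ℂ) * Complex.cos y = a + b := by
      rw [Complex.two_cos, ha, hb, neg_mul]
    have h1 : ((a + b)) ^ n = ∑ k ∈ range (n+1), a ^ k * b ^ (n - k) * (n.choose k : ℂ) :=
      add_pow a b n
    have h2 : ((a + b)) ^ n = ∑ k ∈ range (n+1), b ^ k * a ^ (n - k) * (n.choose k : ℂ) := by
      rw [add_comm a b]; exact add_pow b a n
    have hab : ∀ k ∈ range (n+1),
        a ^ k * b ^ (n-k) * (n.choose k : ℂ) + b ^ k * a ^ (n-k) * (n.choose k : ℂ)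
        = (n.choose k : ℂ) * (2 * Complex.cos ((((n:ℝ) - 2*(k:ℝ)) * y : ℝ) : ℂ)) := by
      intro k hk
      have hkn : k ≤ n := by simpa [Nat.lt_succ_iff] using hk
      have e1 : a ^ k * b ^ (n-k) = Complex.exp (-((((n:ℝ) - 2*(k:ℝ)) * y : ℝ) * Complex.I)) := by
        rw [ha, hb, ← Complex.exp_nat_mul, ← Complex.exp_nat_mul, ← Complex.exp_add]
        congr 1
        have : ((n - k : ℕ) : ℂ) = (n : ℂ) - k := by
          push_cast [hkn]; ring
        rw [this]; push_cast; ring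
      have e2 : b ^ k * a ^ (n-k) = Complex.exp (((((n:ℝ) - 2*(k:ℝ)) * y : ℝ)) * Complex.I) := by
        rw [ha, hb, ← Complex.exp_nat_mul, ← Complex.exp_nat_mul, ← Complex.exp_add]
        congr 1
        have : ((n - k : ℕ) : ℂ) = (n : ℂ) - k := by
          push_cast [hkn]; ring
        rw [this]; push_cast; ring
      rw [e1, e2, Complex.two_cos]; ring
    calc (2:ℂ) * ((2:ℂ) * Complex.cos y) ^ n = (a+b)^n + (a+b)^n := by rw [hcos]; ring
    _ = ∑ k ∈ range (n+1), (a ^ k * b ^ (n-k) * (n.choose k : ℂ) + b ^ k * a ^ (n-k) * (n.choose k : ℂ)) := by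
        rw [Finset.sum_add_distrib, ← h1, ← h2]
    _ = _ := Finset.sum_congr rfl hab
  have key2 : (2:ℂ) * ((2:ℂ) * (Real.cos y : ℂ)) ^ n =
      ∑ k ∈ range (n+1), ((n.choose k : ℝ) : ℂ) *
        (2 * ((Real.cos (((n:ℝ) - 2*(k:ℝ)) * y) : ℝ) : ℂ)) := by
    rw [Complex.ofReal_cos]
    rw [key]
    refine Finset.sum_congr rfl fun k hk => ?_
    rw [Complex.ofReal_cos]
    norm_cast
  have key3 : (2:ℝ) * ((2:ℝ) * Real.cos y) ^ n =
      ∑ k ∈ range (n+1), (n.choose k : ℝ) * (2 * Real.cos (((n:ℝ) - 2*(k:ℝ)) * y)) := by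
    exact_mod_cast key2
  have hs : ∑ k ∈ range (n+1), ww n k * Real.cos (((n:ℝ)-2*(k:ℝ))*y)
      = (∑ k ∈ range (n+1), (n.choose k:ℝ) * (2*Real.cos (((n:ℝ)-2*(k:ℝ))*y))) / (2*2^n) := by
    rw [Finset.sum_div]
    refine Finset.sum_congr rfl fun k _ => ?_
    unfold ww
    field_simp
  rw [hs, ← key3, mul_pow]
  field_simp

lemma cheb_split (n j : ℕ) : chebCoeff n j =
    (if j ≤ n ∧ Even (n - j) then (n.choose ((n-j)/2) : ℝ)/2^n else 0)
  + (if 1 ≤ j ∧ j ≤ n ∧ Even (n - j) then (n.choose ((n+j)/2) : ℝ)/2^n else 0) := by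
  unfold chebCoeff
  rcases eq_or_ne j 0 with rfl | hj
  · simp
  · rw [if_neg hj]
    by_cases h : j ≤ n ∧ Even (n - j)
    · rw [if_pos h, if_pos h, if_pos ⟨Nat.one_le_iff_ne_zero.mpr hj, h⟩]
      obtain ⟨hjn, c, hc⟩ := h
      have hsym : n.choose ((n+j)/2) = n.choose ((n-j)/2) := by
        have h1 : (n+j)/2 ≤ n := by omega
        rw [← Nat.choose_symm h1]
        congr 1
        omega
      rw [hsym]
      have hpow : (2:ℝ)^n = 2 * 2^(n-1) := by
        rw [← pow_succ']
        congr 1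
        omega
      rw [hpow]
      have h2 : (2:ℝ)^(n-1) ≠ 0 := by positivity
      field_simp
      ring
    · rw [if_neg h, if_neg h, if_neg (by tauto)]
      ring

lemma sum_cheb_eq (n m : ℕ) (y : ℝ) :
    ∑ j ∈ range (m+1), chebCoeff n j * Real.cos (j*y)
    = ∑ k ∈ range (n+1), (if n ≤ m + 2*k ∧ 2*k ≤ m + n
        then ww n k * Real.cos (((n:ℝ)-2*(k:ℝ))*y) else 0) := by
  have hL : ∑ j ∈ range (m+1), chebCoeff n j * Real.cos (j*y)
      = (∑ j ∈ range (m+1), if j ≤ n ∧ Even (n - j)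
            then (n.choose ((n-j)/2) : ℝ)/2^n * Real.cos (j*y) else 0)
      + (∑ j ∈ range (m+1), if 1 ≤ j ∧ j ≤ n ∧ Even (n - j)
            then (n.choose ((n+j)/2) : ℝ)/2^n * Real.cos (j*y) else 0) := by
    rw [← Finset.sum_add_distrib]
    refine Finset.sum_congr rfl fun j _ => ?_
    rw [cheb_split]; split_ifs <;> ring
  have hR : ∀ k ∈ range (n+1), (if n ≤ m + 2*k ∧ 2*k ≤ m + n
        then ww n k * Real.cos (((n:ℝ)-2*(k:ℝ))*y) else 0)
      = (if 2*k ≤ n ∧ n ≤ m + 2*k then ww n k * Real.cos (((n:ℝ)-2*(k:ℝ))*y) else 0)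
      + (if n < 2*k ∧ 2*k ≤ m + n then ww n k * Real.cos (((n:ℝ)-2*(k:ℝ))*y) else 0) := by
    intro k _
    split_ifs <;> first | ring1 | (exfalso; omega)
  rw [hL, Finset.sum_congr rfl hR, Finset.sum_add_distrib]
  congr 1
  · rw [← Finset.sum_filter, ← Finset.sum_filter]
    refine Finset.sum_nbij' (fun j => (n-j)/2) (fun k => n - 2*k) ?_ ?_ ?_ ?_ ?_
    · intro j hj
      simp only [Finset.mem_filter, Finset.mem_range] at hj ⊢
      obtain ⟨hjm, hjn, c, hc⟩ := hj
      omega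
    · intro k hk
      simp only [Finset.mem_filter, Finset.mem_range] at hk ⊢
      exact ⟨by omega, by omega, ⟨k, by omega⟩⟩
    · intro j hj
      simp only [Finset.mem_filter, Finset.mem_range] at hj
      obtain ⟨hjm, hjn, c, hc⟩ := hj
      show n - 2 * ((n - j) / 2) = j
      omega
    · intro k hk
      simp only [Finset.mem_filter, Finset.mem_range] at hk
      show (n - (n - 2 * k)) / 2 = k
      omega
    · intro j hj
      simp only [Finset.mem_filter, Finset.mem_range] at hj
      obtain ⟨hjm, hjn, c, hc⟩ := hj
      have hcast : ((n:ℝ) - 2*(((n-j)/2 : ℕ):ℝ)) = (j:ℝ) := by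
        have h1 : n = j + 2 * ((n - j) / 2) := by omega
        have h2 : (n:ℝ) = (j:ℝ) + 2*(((n-j)/2 : ℕ):ℝ) := by exact_mod_cast congrArg (Nat.cast : ℕ → ℝ) h1
        linarith
      show (n.choose ((n-j)/2) : ℝ)/2^n * Real.cos (j*y) = ww n ((n-j)/2) * Real.cos (((n:ℝ)-2*(((n-j)/2:ℕ):ℝ))*y)
      rw [hcast]
      rfl
  · rw [← Finset.sum_filter, ← Finset.sum_filter]
    refine Finset.sum_nbij' (fun j => (n+j)/2) (fun k => 2*k - n) ?_ ?_ ?_ ?_ ?_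
    · intro j hj
      simp only [Finset.mem_filter, Finset.mem_range] at hj ⊢
      obtain ⟨hjm, hj1, hjn, c, hc⟩ := hj
      omega
    · intro k hk
      simp only [Finset.mem_filter, Finset.mem_range] at hk ⊢
      exact ⟨by omega, by omega, by omega, ⟨n - k, by omega⟩⟩
    · intro j hj
      simp only [Finset.mem_filter, Finset.mem_range] at hj
      obtain ⟨hjm, hj1, hjn, c, hc⟩ := hj
      show 2 * ((n + j) / 2) - n = j
      omega
    · intro k hk
      simp only [Finset.mem_filter, Finset.mem_range] at hk
      show (n + (2 * k - n)) / 2 = k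
      omega
    · intro j hj
      simp only [Finset.mem_filter, Finset.mem_range] at hj
      obtain ⟨hjm, hj1, hjn, c, hc⟩ := hj
      have h1 : 2 * ((n + j) / 2) = n + j := by omega
      have h2 : 2*(((n+j)/2 : ℕ):ℝ) = (n:ℝ) + (j:ℝ) := by exact_mod_cast congrArg (Nat.cast : ℕ → ℝ) h1
      have hcast : ((n:ℝ) - 2*(((n+j)/2 : ℕ):ℝ)) * y = -((j:ℝ)*y) := by
        have h3 : ((n:ℝ) - 2*(((n+j)/2 : ℕ):ℝ)) = -(j:ℝ) := by linarith
        rw [h3]; ring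
      show (n.choose ((n+j)/2) : ℝ)/2^n * Real.cos (j*y) = ww n ((n+j)/2) * Real.cos (((n:ℝ)-2*(((n+j)/2:ℕ):ℝ))*y)
      rw [hcast, Real.cos_neg]
      rfl

lemma one_tail (n d : ℕ) (hn : 0 < n) :
    ∑ k ∈ range (n+1), (if d + 2*k < n then ww n k else 0)
      ≤ Real.exp (-(d:ℝ)^2 / (2*(n:ℝ))) := by
  set t : ℝ := (d:ℝ)/(n:ℝ) with ht
  have hn' : (0:ℝ) < n := by exact_mod_cast hn
  have ht0 : 0 ≤ t := by positivity
  have hmgf : ∑ k ∈ range (n+1), ww n k * Real.exp (t * ((n:ℝ) - 2*(k:ℝ)))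
      = Real.cosh t ^ n := by
    have hbin : (Real.exp (-t) + Real.exp t)^n
        = ∑ k ∈ range (n+1), (Real.exp (-t))^k * (Real.exp t)^(n-k) * (n.choose k:ℝ) :=
      add_pow _ _ n
    have hcosh : Real.cosh t ^ n = (Real.exp (-t) + Real.exp t)^n / 2^n := by
      rw [Real.cosh_eq, div_pow]
      ring_nf
    rw [hcosh, hbin, Finset.sum_div]
    refine Finset.sum_congr rfl fun k hk => ?_
    have hkn : k ≤ n := by simpa [Nat.lt_succ_iff] using hk
    have e1 : (Real.exp (-t))^k * (Real.exp t)^(n-k) = Real.exp (t * ((n:ℝ) - 2*(k:ℝ))) := by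
      rw [← Real.exp_nat_mul, ← Real.exp_nat_mul, ← Real.exp_add]
      congr 1
      have : ((n - k : ℕ) : ℝ) = (n:ℝ) - (k:ℝ) := by
        push_cast [hkn]; ring
      rw [this]; ring
    rw [e1]
    unfold ww
    ring
  have hstep : ∀ k ∈ range (n+1), (if d + 2*k < n then ww n k else 0)
      ≤ Real.exp (-(t*(d:ℝ))) * (ww n k * Real.exp (t * ((n:ℝ) - 2*(k:ℝ)))) := by
    intro k hk
    split_ifs with h
    · have hw := ww_nonneg n k
      have hd' : (d:ℝ) ≤ (n:ℝ) - 2*(k:ℝ) := by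
        have : (d:ℝ) + 2*(k:ℝ) + 1 ≤ (n:ℝ) := by exact_mod_cast h
        linarith
      have h1 : Real.exp (t*(d:ℝ)) ≤ Real.exp (t*((n:ℝ)-2*(k:ℝ))) :=
        Real.exp_le_exp.mpr (mul_le_mul_of_nonneg_left hd' ht0)
      have heq : ww n k = Real.exp (-(t*(d:ℝ))) * (ww n k * Real.exp (t*(d:ℝ))) := by
        rw [mul_comm (Real.exp (-(t*(d:ℝ))))]
        rw [mul_assoc, ← Real.exp_add]
        simp
      calc ww n k = Real.exp (-(t*(d:ℝ))) * (ww n k * Real.exp (t*(d:ℝ))) := heq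
        _ ≤ _ := mul_le_mul_of_nonneg_left (mul_le_mul_of_nonneg_left h1 hw) (Real.exp_pos _).le
    · have hw := ww_nonneg n k
      positivity
  calc ∑ k ∈ range (n+1), (if d + 2*k < n then ww n k else 0)
      ≤ ∑ k ∈ range (n+1), Real.exp (-(t*(d:ℝ))) * (ww n k * Real.exp (t * ((n:ℝ) - 2*(k:ℝ)))) :=
        Finset.sum_le_sum hstep
    _ = Real.exp (-(t*(d:ℝ))) * Real.cosh t ^ n := by rw [← Finset.mul_sum, hmgf]
    _ ≤ Real.exp (-(t*(d:ℝ))) * (Real.exp (t^2/2)) ^ n := by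
        refine mul_le_mul_of_nonneg_left ?_ (Real.exp_pos _).le
        exact pow_le_pow_left₀ ((Real.cosh_pos (x := t)).le) (Real.cosh_le_exp_half_sq t) n
    _ = Real.exp (-(t*(d:ℝ)) + (n:ℝ)*(t^2/2)) := by
        rw [← Real.exp_nat_mul, ← Real.exp_add]
    _ = Real.exp (-(d:ℝ)^2 / (2*(n:ℝ))) := by
        congr 1
        rw [ht]
        field_simp
        ring

lemma tail_bound (n d : ℕ) (hn : 0 < n) :
    ∑ k ∈ range (n+1), (if ¬(n ≤ d + 2*k ∧ 2*k ≤ d + n) then ww n k else 0)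
      ≤ 2 * Real.exp (-(d:ℝ)^2 / (2*(n:ℝ))) := by
  have hsplit : ∀ k ∈ range (n+1), (if ¬(n ≤ d + 2*k ∧ 2*k ≤ d + n) then ww n k else 0)
      = (if d + 2*k < n then ww n k else 0) + (if d + n < 2*k then ww n k else 0) := by
    intro k _; split_ifs <;> first | ring1 | (exfalso; omega)
  rw [Finset.sum_congr rfl hsplit, Finset.sum_add_distrib]
  have hsym : ∑ k ∈ range (n+1), (if d + n < 2*k then ww n k else 0)
      = ∑ k ∈ range (n+1), (if d + 2*k < n then ww n k else 0) := by
    rw [← Finset.sum_filter, ← Finset.sum_filter]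
    refine Finset.sum_nbij' (fun k => n - k) (fun k => n - k) ?_ ?_ ?_ ?_ ?_
    · intro k hk; simp only [Finset.mem_filter, Finset.mem_range] at hk ⊢; omega
    · intro k hk; simp only [Finset.mem_filter, Finset.mem_range] at hk ⊢; omega
    · intro k hk; simp only [Finset.mem_filter, Finset.mem_range] at hk
      show n - (n - k) = k; omega
    · intro k hk; simp only [Finset.mem_filter, Finset.mem_range] at hk
      show n - (n - k) = k; omega
    · intro k hk; simp only [Finset.mem_filter, Finset.mem_range] at hk
      show ww n k = ww n (n - k)
      unfold ww
      rw [Nat.choose_symm (by omega)]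
  rw [hsym]
  have h1 := one_tail n d hn
  linarith

/-- For `d ≥ ⌈√(2 n ln (2/δ))⌉`, the Laurent polynomial
`∑_{j=0}^{d} (c_{n,j}/2)(z^j + z^{-j})` evaluated at `z = e^{iy}`, i.e.
`∑_{j=0}^{d} c_{n,j} cos (j y)`, uniformly `δ`-approximates `cos^n y` over all real `y`,
with the error also bounded by `2 exp (-d²/(2n))`. -/
theorem cos_pow_laurent_approx (n d : ℕ) (hn : 0 < n) (hd0 : 0 < d) (δ : ℝ) (hδ : 0 < δ)
    (hd : ⌈Real.sqrt (2 * n * Real.log (2 / δ))⌉₊ ≤ d) :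
    ∀ y : ℝ,
      |Real.cos y ^ n - ∑ j ∈ Finset.range (d + 1), chebCoeff n j * Real.cos (j * y)| ≤
          2 * Real.exp (-(d : ℝ) ^ 2 / (2 * n)) ∧
        |Real.cos y ^ n - ∑ j ∈ Finset.range (d + 1), chebCoeff n j * Real.cos (j * y)|
          ≤ δ := by
  intro y
  have herr : Real.cos y ^ n - ∑ j ∈ Finset.range (d + 1), chebCoeff n j * Real.cos (j * y)
      = ∑ k ∈ range (n+1), (if ¬(n ≤ d + 2*k ∧ 2*k ≤ d + n)
          then ww n k * Real.cos (((n:ℝ)-2*(k:ℝ))*y) else 0) := by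
    rw [cos_pow_expand n y, sum_cheb_eq n d y, ← Finset.sum_sub_distrib]
    refine Finset.sum_congr rfl fun k _ => ?_
    split_ifs <;> first | ring1 | (exfalso; tauto)
  have hb1 : |Real.cos y ^ n - ∑ j ∈ Finset.range (d + 1), chebCoeff n j * Real.cos (j * y)|
      ≤ 2 * Real.exp (-(d : ℝ) ^ 2 / (2 * (n:ℝ))) := by
    rw [herr]
    refine (Finset.abs_sum_le_sum_abs _ _).trans ((Finset.sum_le_sum ?_).trans (tail_bound n d hn))
    intro k _
    split_ifs with h
    · simp
    · calc |ww n k * Real.cos (((n:ℝ)-2*(k:ℝ))*y)|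
          = ww n k * |Real.cos (((n:ℝ)-2*(k:ℝ))*y)| := by
            rw [abs_mul, abs_of_nonneg (ww_nonneg n k)]
        _ ≤ ww n k * 1 := mul_le_mul_of_nonneg_left (Real.abs_cos_le_one _) (ww_nonneg n k)
        _ = ww n k := mul_one _
  refine ⟨hb1, hb1.trans ?_⟩
  have hn' : (0:ℝ) < n := by exact_mod_cast hn
  rcases le_or_gt (Real.log (2/δ)) 0 with hlog | hlog
  · have h2δ : 2 ≤ δ := by
      by_contra hc
      push_neg at hc
      have h1 : 1 < 2/δ := by rw [lt_div_iff₀ hδ]; linarith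
      have := Real.log_pos h1
      linarith
    have hx : -(d:ℝ)^2/(2*(n:ℝ)) ≤ 0 := by
      rw [neg_div]
      exact neg_nonpos.mpr (by positivity)
    have hexp1 : Real.exp (-(d:ℝ)^2/(2*(n:ℝ))) ≤ Real.exp 0 := Real.exp_le_exp.mpr hx
    rw [Real.exp_zero] at hexp1
    linarith
  · have hsqrt : Real.sqrt (2*(n:ℝ)*Real.log (2/δ)) ≤ (d:ℝ) := by
      have := Nat.ceil_le.mp hd
      exact_mod_cast this
    have h0 : 0 ≤ 2*(n:ℝ)*Real.log (2/δ) := by positivity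
    have harg : 2*(n:ℝ)*Real.log (2/δ) ≤ (d:ℝ)^2 := by
      nlinarith [Real.sq_sqrt h0, Real.sqrt_nonneg (2*(n:ℝ)*Real.log (2/δ))]
    have hexp : -(d:ℝ)^2/(2*(n:ℝ)) ≤ -Real.log (2/δ) := by
      rw [div_le_iff₀ (by positivity : (0:ℝ) < 2*(n:ℝ))]
      nlinarith
    calc 2*Real.exp (-(d:ℝ)^2/(2*(n:ℝ)))
        ≤ 2*Real.exp (-Real.log (2/δ)) :=
          mul_le_mul_of_nonneg_left (Real.exp_le_exp.mpr hexp) (by norm_num)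
      _ = δ := by
          rw [Real.exp_neg, Real.exp_log (by positivity)]
          field_simp
end

section
/- For every nonnegative integer n and every positive integer d with 2 exp(-d²/(2n)) ≤ δ, the truncated Chebyshev expansion satisfies sup_{y in ℝ} |sin^n(y) - sum_{j=0}^{d} c_{n,j} cos(j(π/2 - y))| ≤ δ. -/
open Finset

lemma cos_pow_eq (n : ℕ) (x : ℝ) :
    Real.cos x ^ n = ∑ j ∈ range (n + 1),
      (n.choose j : ℝ) / 2 ^ n * Real.cos ((((n : ℤ) - 2 * j : ℤ) : ℝ) * x) := by
  have hC : (Complex.cos x) ^ n = ∑ j ∈ range (n + 1),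
      (n.choose j : ℂ) / 2 ^ n *
        Complex.exp (((((2 * j : ℤ) - n : ℤ) : ℝ) * x : ℝ) * Complex.I) := by
    rw [Complex.cos, mul_comm]
    rw [div_pow, add_pow]
    rw [Finset.sum_div]
    refine Finset.sum_congr rfl fun j hj => ?_
    have hj' : j ≤ n := by simpa [Nat.lt_succ_iff] using hj
    rw [← Complex.exp_nat_mul, ← Complex.exp_nat_mul, ← Complex.exp_add]
    have hA : (j : ℂ) * (Complex.I * x) + ((n - j : ℕ) : ℂ) * (-x * Complex.I)
        = ((((2 * j : ℤ) - n : ℤ) : ℝ) * x : ℝ) * Complex.I := by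
      push_cast [hj']; ring
    rw [hA]; ring
  have := congrArg Complex.re hC
  rw [← Complex.ofReal_cos, ← Complex.ofReal_pow, Complex.ofReal_re] at this
  rw [this, Complex.re_sum]
  refine Finset.sum_congr rfl fun j hj => ?_
  have h1 : ((n.choose j : ℂ) / 2 ^ n) = ((n.choose j / 2 ^ n : ℝ) : ℂ) := by push_cast; ring
  rw [h1, Complex.re_ofReal_mul, Complex.exp_ofReal_mul_I_re]
  have h2 : ((((n : ℤ) - 2 * j : ℤ) : ℝ) * x) = -((((2 * j : ℤ) - n : ℤ) : ℝ) * x) := by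
    push_cast; ring
  rw [h2, Real.cos_neg]

lemma fiber_sum (n k : ℕ) (x : ℝ) :
    ∑ j ∈ (range (n + 1)).filter (fun j : ℕ => ((n : ℤ) - 2 * j).natAbs = k),
      (n.choose j : ℝ) / 2 ^ n * Real.cos ((((n : ℤ) - 2 * j : ℤ) : ℝ) * x)
    = chebCoeff n k * Real.cos (k * x) := by
  rcases eq_or_ne k 0 with rfl | hk
  · by_cases hev : Even n
    · have hev' := hev
      rw [Nat.even_iff] at hev'
      have hset : (range (n + 1)).filter (fun j : ℕ => ((n : ℤ) - 2 * j).natAbs = 0) = {n / 2} := by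
        ext j; simp only [mem_filter, mem_range, mem_singleton]; omega
      rw [hset, Finset.sum_singleton]
      have h0 : ((n : ℤ) - 2 * (n / 2 : ℕ)) = 0 := by omega
      rw [h0, chebCoeff]
      simp [hev]
    · have hev' := hev
      rw [Nat.even_iff] at hev'
      have hset : (range (n + 1)).filter (fun j : ℕ => ((n : ℤ) - 2 * j).natAbs = 0) = ∅ := by
        ext j; simp only [mem_filter, mem_range, Finset.notMem_empty, iff_false, not_and]; omega
      rw [hset, Finset.sum_empty, chebCoeff]
      simp [hev]
  · by_cases hc : k ≤ n ∧ Even (n - k)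
    · obtain ⟨hkn, hev⟩ := hc
      have hev' := hev
      rw [Nat.even_iff] at hev'
      have hne : (n - k) / 2 ≠ (n + k) / 2 := by omega
      have hset : (range (n + 1)).filter (fun j : ℕ => ((n : ℤ) - 2 * j).natAbs = k)
          = {(n - k) / 2, (n + k) / 2} := by
        ext j
        simp only [mem_filter, mem_range, mem_insert, mem_singleton]
        omega
      rw [hset, Finset.sum_pair hne]
      have h1 : ((n : ℤ) - 2 * ((n - k) / 2 : ℕ)) = k := by omega
      have h2 : ((n : ℤ) - 2 * ((n + k) / 2 : ℕ)) = -k := by omega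
      have h3 : n.choose ((n + k) / 2) = n.choose ((n - k) / 2) := by
        have : (n + k) / 2 = n - (n - k) / 2 := by omega
        rw [this, Nat.choose_symm (by omega)]
      rw [h1, h2, h3, chebCoeff, if_neg hk, if_pos ⟨hkn, hev⟩]
      push_cast
      rw [show (-(k:ℝ) * x) = -((k:ℝ) * x) by ring, Real.cos_neg]
      have hn1 : (2 : ℝ) ^ n = 2 ^ (n - 1) * 2 := by
        rw [← pow_succ]; congr 1; omega
      rw [hn1]
      ring
    · have hset : (range (n + 1)).filter (fun j : ℕ => ((n : ℤ) - 2 * j).natAbs = k) = ∅ := by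
        ext j
        simp only [mem_filter, mem_range, Finset.notMem_empty, iff_false, not_and]
        rw [Decidable.not_and_iff_or_not, Nat.even_iff] at hc
        omega
      rw [hset, Finset.sum_empty, chebCoeff, if_neg hk, if_neg hc, zero_mul]


lemma chernoff (n d : ℕ) (hn : 0 < n) :
    ∑ j ∈ (range (n + 1)).filter (fun j : ℕ => (d : ℤ) < (n : ℤ) - 2 * j), (n.choose j : ℝ)
      ≤ 2 ^ n * Real.exp (-(d : ℝ) ^ 2 / (2 * n)) := by
  set t : ℝ := d / n with ht_def
  have hnR : (0 : ℝ) < n := by exact_mod_cast hn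
  have ht : 0 ≤ t := div_nonneg (Nat.cast_nonneg d) hnR.le
  have step1 : ∑ j ∈ (range (n + 1)).filter (fun j : ℕ => (d : ℤ) < (n : ℤ) - 2 * j),
      (n.choose j : ℝ)
      ≤ ∑ j ∈ range (n + 1),
        (n.choose j : ℝ) * (Real.exp (-(t * d)) * (Real.exp t ^ (n - j) * Real.exp (-t) ^ j)) := by
    refine le_trans (Finset.sum_le_sum fun j hj => ?_)
      (Finset.sum_le_sum_of_subset_of_nonneg (Finset.filter_subset _ _) fun j hj _ => by positivity)
    simp only [mem_filter, mem_range] at hj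
    obtain ⟨hjn, hdj⟩ := hj
    have hjn' : j ≤ n := by omega
    rw [← Real.exp_nat_mul, ← Real.exp_nat_mul, ← Real.exp_add, ← Real.exp_add]
    refine le_mul_of_one_le_right (Nat.cast_nonneg _) (Real.one_le_exp ?_)
    have : -(t * d) + ((n - j : ℕ) * t + j * -t) = t * (((n : ℤ) - 2 * j : ℤ) - d) := by
      push_cast [hjn']; ring
    rw [this]
    have : (0 : ℝ) ≤ (((n : ℤ) - 2 * j : ℤ) - d : ℤ) := by exact_mod_cast (by omega : (0:ℤ) ≤ ((n : ℤ) - 2 * j) - d)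
    exact mul_nonneg ht (by exact_mod_cast this)
  have step2 : ∑ j ∈ range (n + 1),
      (n.choose j : ℝ) * (Real.exp (-(t * d)) * (Real.exp t ^ (n - j) * Real.exp (-t) ^ j))
      = Real.exp (-(t * d)) * (Real.exp (-t) + Real.exp t) ^ n := by
    rw [add_pow, Finset.mul_sum]
    refine Finset.sum_congr rfl fun j hj => ?_
    ring
  have hcosh : Real.exp (-t) + Real.exp t = 2 * Real.cosh t := by
    rw [Real.cosh_eq]; ring
  have step3 : (Real.exp (-t) + Real.exp t) ^ n ≤ 2 ^ n * Real.exp (n * t ^ 2 / 2) := by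
    rw [hcosh, mul_pow]
    gcongr
    calc Real.cosh t ^ n ≤ Real.exp (t ^ 2 / 2) ^ n := by
          gcongr
          exact Real.cosh_le_exp_half_sq t
      _ = Real.exp (n * t ^ 2 / 2) := by
          rw [← Real.exp_nat_mul]; ring_nf
  have final : Real.exp (-(t * d)) * (2 ^ n * Real.exp ((n : ℝ) * t ^ 2 / 2))
      = 2 ^ n * Real.exp (-(d : ℝ) ^ 2 / (2 * n)) := by
    rw [← mul_assoc, mul_comm (Real.exp _) ((2:ℝ) ^ n), mul_assoc, ← Real.exp_add]
    congr 1
    rw [ht_def]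
    field_simp
    ring
  calc _ ≤ _ := step1
    _ = _ := step2
    _ ≤ Real.exp (-(t * d)) * (2 ^ n * Real.exp ((n : ℝ) * t ^ 2 / 2)) := by
        gcongr
    _ = _ := final

lemma chernoff' (n d : ℕ) (hn : 0 < n) :
    ∑ j ∈ (range (n + 1)).filter (fun j : ℕ => (n : ℤ) - 2 * j < -(d : ℤ)), (n.choose j : ℝ)
      ≤ 2 ^ n * Real.exp (-(d : ℝ) ^ 2 / (2 * n)) := by
  refine le_trans (le_of_eq ?_) (chernoff n d hn)
  refine Finset.sum_nbij' (fun j => n - j) (fun j => n - j) ?_ ?_ ?_ ?_ ?_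
  · intro a ha; simp only [mem_filter, mem_range] at ha ⊢; omega
  · intro a ha; simp only [mem_filter, mem_range] at ha ⊢; omega
  · intro a ha; simp only [mem_filter, mem_range] at ha; omega
  · intro a ha; simp only [mem_filter, mem_range] at ha; omega
  · intro a ha
    simp only [mem_filter, mem_range] at ha
    rw [Nat.choose_symm (by omega)]


lemma partial_sum_eq (n d : ℕ) (x : ℝ) :
    ∑ k ∈ range (d + 1), chebCoeff n k * Real.cos (k * x)
    = ∑ j ∈ (range (n + 1)).filter (fun j : ℕ => ((n : ℤ) - 2 * j).natAbs ≤ d),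
        (n.choose j : ℝ) / 2 ^ n * Real.cos ((((n : ℤ) - 2 * j : ℤ) : ℝ) * x) := by
  symm
  rw [← Finset.sum_fiberwise_of_maps_to
    (s := (range (n + 1)).filter (fun j : ℕ => ((n : ℤ) - 2 * j).natAbs ≤ d))
    (g := fun j : ℕ => ((n : ℤ) - 2 * j).natAbs)
    (t := range (d + 1)) (fun j hj => by simp only [mem_filter] at hj; simp [Nat.lt_succ_iff, hj.2])]
  refine Finset.sum_congr rfl fun k hk => ?_
  rw [mem_range, Nat.lt_succ_iff] at hk
  rw [Finset.filter_filter]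
  have hfe : (range (n + 1)).filter
        (fun j : ℕ => ((n : ℤ) - 2 * j).natAbs ≤ d ∧ ((n : ℤ) - 2 * j).natAbs = k)
      = (range (n + 1)).filter (fun j : ℕ => ((n : ℤ) - 2 * j).natAbs = k) := by
    ext j; simp only [mem_filter]; constructor
    · rintro ⟨h1, _, h3⟩; exact ⟨h1, h3⟩
    · rintro ⟨h1, h3⟩; exact ⟨h1, h3 ▸ hk, h3⟩
  rw [hfe, fiber_sum]

/-- If `2 exp (-d²/(2n)) ≤ δ`, then
`sup_{y ∈ ℝ} |sin^n y - ∑_{j=0}^{d} c_{n,j} cos (j(π/2 - y))| ≤ δ`. -/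
theorem sin_pow_laurent_approx (n d : ℕ) (hn : 0 < n) (hd0 : 0 < d) (δ : ℝ)
    (hδ : 2 * Real.exp (-(d : ℝ) ^ 2 / (2 * n)) ≤ δ) :
    ∀ y : ℝ,
      |Real.sin y ^ n -
          ∑ j ∈ Finset.range (d + 1), chebCoeff n j * Real.cos (j * (Real.pi / 2 - y))|
        ≤ δ := by
  intro y
  set x : ℝ := Real.pi / 2 - y with hx
  have hsin : Real.sin y = Real.cos x := (Real.cos_pi_div_two_sub y).symm
  rw [hsin, cos_pow_eq, partial_sum_eq]
  set f : ℕ → ℝ := fun j => (n.choose j : ℝ) / 2 ^ n * Real.cos ((((n : ℤ) - 2 * j : ℤ) : ℝ) * x)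
    with hf
  have hsplit : ∑ j ∈ range (n + 1), f j
      = ∑ j ∈ (range (n + 1)).filter (fun j : ℕ => ((n : ℤ) - 2 * j).natAbs ≤ d), f j
      + ∑ j ∈ (range (n + 1)).filter (fun j : ℕ => ¬ ((n : ℤ) - 2 * j).natAbs ≤ d), f j :=
    (Finset.sum_filter_add_sum_filter_not _ _ _).symm
  rw [hsplit, add_sub_cancel_left]
  set s : Finset ℕ := (range (n + 1)).filter (fun j : ℕ => ¬ ((n : ℤ) - 2 * j).natAbs ≤ d)
    with hs
  have habs : |∑ j ∈ s, f j| ≤ ∑ j ∈ s, (n.choose j : ℝ) / 2 ^ n := by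
    refine le_trans (Finset.abs_sum_le_sum_abs _ _) (Finset.sum_le_sum fun j hj => ?_)
    rw [hf, abs_mul]
    have h1 : |(n.choose j : ℝ) / 2 ^ n| = (n.choose j : ℝ) / 2 ^ n := abs_of_nonneg (by positivity)
    rw [h1]
    refine mul_le_of_le_one_right (by positivity) ?_
    exact Real.abs_cos_le_one _
  have hsplit2 : ∑ j ∈ s, (n.choose j : ℝ) / 2 ^ n
      = ∑ j ∈ (range (n + 1)).filter (fun j : ℕ => (d : ℤ) < (n : ℤ) - 2 * j),
          (n.choose j : ℝ) / 2 ^ n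
      + ∑ j ∈ (range (n + 1)).filter (fun j : ℕ => (n : ℤ) - 2 * j < -(d : ℤ)),
          (n.choose j : ℝ) / 2 ^ n := by
    rw [hs, ← Finset.sum_filter_add_sum_filter_not
      ((range (n + 1)).filter (fun j : ℕ => ¬ ((n : ℤ) - 2 * j).natAbs ≤ d))
      (fun j : ℕ => (d : ℤ) < (n : ℤ) - 2 * j)]
    congr 1
    · congr 1
      rw [Finset.filter_filter]
      ext j; simp only [mem_filter, mem_range]; omega
    · congr 1
      rw [Finset.filter_filter]
      ext j; simp only [mem_filter, mem_range]; omega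
  have hpow : (0 : ℝ) < 2 ^ n := by positivity
  have htail1 := chernoff n d hn
  have htail2 := chernoff' n d hn
  have hb : ∑ j ∈ s, (n.choose j : ℝ) / 2 ^ n ≤ 2 * Real.exp (-(d : ℝ) ^ 2 / (2 * n)) := by
    rw [hsplit2]
    rw [← Finset.sum_div, ← Finset.sum_div]
    rw [← add_div, div_le_iff₀ hpow]
    calc _ ≤ 2 ^ n * Real.exp (-(d : ℝ) ^ 2 / (2 * n)) + 2 ^ n * Real.exp (-(d : ℝ) ^ 2 / (2 * n)) :=
          add_le_add htail1 htail2
      _ = 2 * Real.exp (-(d : ℝ) ^ 2 / (2 * n)) * 2 ^ n := by ring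
  calc |∑ j ∈ s, f j| ≤ ∑ j ∈ s, (n.choose j : ℝ) / 2 ^ n := habs
    _ ≤ 2 * Real.exp (-(d : ℝ) ^ 2 / (2 * n)) := hb
    _ ≤ δ := hδ
end
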